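/- For every real number α > 0, the alternating 3-form φ_α = (α/2)(e¹²⁷ + e³⁴⁷ + e⁵⁶⁷) + e¹³⁵ − e¹⁴⁶ − e²³⁶ − e²⁴⁵ on the Lie algebra 𝔨_α (structure equations de¹ = −α e¹⁷, de² = −2 e³⁵, de³ = −e²⁵ − e⁵⁷, de⁴ = (α/2) e⁴⁷ − e⁶⁷, de⁵ = e²³ + e³⁷, de⁶ = e⁴⁷ + (α/2) e⁶⁷, de⁷ = 0) is closed with respect to the Chevalley–Eilenberg differential: dφ_α = 0. -/

import Mathlib

/-!
Common framework: unbundled exterior forms on ℝ⁷, wedge product, interior product,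
Chevalley–Eilenberg differential of a Lie bracket, induced inner products on forms,
derived series, and the Lie algebras / G₂-structures from the paper
"Laplacian flow solitons on non-solvable Lie groups" (Fino–Raffero).
-/

open scoped BigOperators

namespace G2Solitons

/-- The underlying vector space ℝ⁷. -/
abbrev V7 : Type := Fin 7 → ℝ

/-- Unbundled `k`-forms: real-valued functions of `k` vectors of ℝ⁷. -/
abbrev Form (k : ℕ) : Type := (Fin k → V7) → ℝ

/-- Standard basis of ℝ⁷. -/
def stdB (i : Fin 7) : V7 := fun j => if j = i then 1 else 0

/-- The basic `k`-form `e^{i₁} ∧ ⋯ ∧ e^{i_k}` (determinant convention, 0-indexed). -/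
def eB {k : ℕ} (idx : Fin k → Fin 7) : Form k :=
  fun v => Matrix.det (Matrix.of fun a b : Fin k => v a (idx b))

/-- Wedge product of a `p`-form and a `q`-form (convention
`(α∧β)(v) = (p!q!)⁻¹ ∑_σ sgn σ · α(v∘σ|_{first p}) β(v∘σ|_{last q})`). -/
noncomputable def wedge {p q : ℕ} (α : Form p) (β : Form q) : Form (p + q) := fun v =>
  ((p.factorial * q.factorial : ℕ) : ℝ)⁻¹ *
    ∑ σ : Equiv.Perm (Fin (p + q)),
      ((Equiv.Perm.sign σ : ℤ) : ℝ) *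
        (α (fun i => v (σ (Fin.castAdd q i))) * β (fun j => v (σ (Fin.natAdd p j))))

/-- Interior product of a vector with a `(k+1)`-form. -/
def iprod {k : ℕ} (u : V7) (α : Form (k + 1)) : Form k := fun v => α (Fin.cons u v)

/-- Chevalley–Eilenberg differential of a `(k+1)`-form with respect to a bracket:
`(dα)(x₀,…,x_{k+1}) = ∑_{i<j} (-1)^{i+j} α([xᵢ,xⱼ], x₀,…,x̂ᵢ,…,x̂ⱼ,…,x_{k+1})`. -/
def dCE {k : ℕ} (br : V7 → V7 → V7) (α : Form (k + 1)) : Form (k + 2) := fun v =>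
  ∑ i : Fin (k + 2), ∑ j : Fin (k + 2),
    if (i : ℕ) < (j : ℕ) then
      (-1 : ℝ) ^ ((i : ℕ) + (j : ℕ)) *
        α (Fin.cons (br (v i) (v j)) fun l : Fin k =>
            if (l : ℕ) < (i : ℕ) then v ⟨(l : ℕ), by omega⟩
            else if (l : ℕ) + 1 < (j : ℕ) then v ⟨(l : ℕ) + 1, by omega⟩
            else v ⟨(l : ℕ) + 2, by omega⟩)
    else 0

/-- Inner product on `k`-forms induced by the diagonal metric `g = ∑ᵢ c i (e^i)²`,
determined by declaring `{(c i₁ ⋯ c i_k)^{-1/2} e^{i₁⋯i_k} : i₁ < ⋯ < i_k}` orthonormal. -/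
noncomputable def formInner (c : Fin 7 → ℝ) {k : ℕ} (α β : Form k) : ℝ :=
  ((k.factorial : ℕ) : ℝ)⁻¹ *
    ∑ f : Fin k → Fin 7,
      (∏ i, c (f i))⁻¹ * (α (fun i => stdB (f i)) * β (fun i => stdB (f i)))

/-- Natural action of an endomorphism `D` on a `k`-form:
`(D.α)(v₁,…,v_k) = ∑ᵢ α(v₁,…,D vᵢ,…,v_k)`. -/
def actD {k : ℕ} (D : V7 → V7) (α : Form k) : Form k := fun v =>
  ∑ i : Fin k, α (Function.update v i (D (v i)))

/-- The Jacobi identity for a bilinear bracket. -/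
def Jacobi (br : V7 → V7 → V7) : Prop :=
  ∀ x y z : V7, br (br x y) z + br (br y z) x + br (br z x) y = 0

/-- Unimodularity: `tr (ad x) = 0` for all `x`. -/
def Unimodular (br : V7 → V7 → V7) : Prop :=
  ∀ x : V7, ∑ i : Fin 7, br x (stdB i) i = 0

/-- Derivation property for a map `D`. -/
def IsDeriv (br : V7 → V7 → V7) (D : V7 → V7) : Prop :=
  ∀ x y : V7, D (br x y) = br (D x) y + br x (D y)

/-- Derived series of a bracket. -/
def derSeries (br : V7 → V7 → V7) : ℕ → Submodule ℝ V7
  | 0 => ⊤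
  | n + 1 => Submodule.span ℝ
      {z | ∃ x ∈ derSeries br n, ∃ y ∈ derSeries br n, z = br x y}

/-- Solvability: the derived series terminates at zero. -/
def Solvable (br : V7 → V7 → V7) : Prop := ∃ n, derSeries br n = ⊥

/-- Real cube root (the real root, also for negative arguments). -/
noncomputable def cbrt (x : ℝ) : ℝ :=
  if x < 0 then -((-x) ^ ((1 : ℝ) / 3)) else x ^ ((1 : ℝ) / 3)

/-- The standard volume form `e^{1234567}`. -/
def vol7 : Form 7 := eB ![0, 1, 2, 3, 4, 5, 6]

end G2Solitons

namespace G2Solitons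

noncomputable section

/-- The bracket of the Lie algebra `𝔨_α` with structure equations
`(-α e¹⁷, -2 e³⁵, -e²⁵ - e⁵⁷, (α/2) e⁴⁷ - e⁶⁷, e²³ + e³⁷, e⁴⁷ + (α/2) e⁶⁷, 0)`,
via the convention `dβ(x,y) = -β([x,y])`. -/
def brK (α : ℝ) : V7 → V7 → V7 := fun x y =>
  ![α * (x 0 * y 6 - x 6 * y 0),
    2 * (x 2 * y 4 - x 4 * y 2),
    (x 1 * y 4 - x 4 * y 1) + (x 4 * y 6 - x 6 * y 4),
    -(α / 2) * (x 3 * y 6 - x 6 * y 3) + (x 5 * y 6 - x 6 * y 5),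
    -(x 1 * y 2 - x 2 * y 1) - (x 2 * y 6 - x 6 * y 2),
    -(x 3 * y 6 - x 6 * y 3) - α / 2 * (x 5 * y 6 - x 6 * y 5),
    0]

/-- `φ_α = (α/2)(e¹²⁷ + e³⁴⁷ + e⁵⁶⁷) + e¹³⁵ - e¹⁴⁶ - e²³⁶ - e²⁴⁵`. -/
def phiK (α : ℝ) : Form 3 := fun v =>
  α / 2 * (eB ![0, 1, 6] v + eB ![2, 3, 6] v + eB ![4, 5, 6] v)
    + eB ![0, 2, 4] v - eB ![0, 3, 5] v - eB ![1, 2, 5] v - eB ![1, 3, 4] v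

/-- Diagonal coefficients of the metric `g_{φ_α} = ∑_{i=1}^{6} (e^i)² + (α²/4)(e⁷)²`. -/
def cK (α : ℝ) : Fin 7 → ℝ := ![1, 1, 1, 1, 1, 1, α ^ 2 / 4]

/-- The metric `g_{φ_α}` as a bilinear form. -/
def gK (α : ℝ) (u v : V7) : ℝ := ∑ i : Fin 7, cK α i * u i * v i

/-- The volume form `dV_{φ_α} = (α/2) e¹²³⁴⁵⁶⁷`. -/
def dVK (α : ℝ) : Form 7 := fun v => α / 2 * vol7 v

/-- `τ_α = 4 e¹² - 2 e³⁴ - 2 e⁵⁶`. -/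
def tauK : Form 2 := fun v =>
  4 * eB ![0, 1] v - 2 * eB ![2, 3] v - 2 * eB ![4, 5] v

/-- `D = diag(-2, 0, 0, 4, 0, 4, 0)`. -/
def DK : V7 → V7 := fun x i => (![-2, 0, 0, 4, 0, 4, 0] : Fin 7 → ℝ) i * x i

end

end G2Solitons

namespace G2Solitons

theorem fin_cons_eq_vecCons_two {β : Type*} (a : β) (f : Fin 2 → β) :
    (Fin.cons a f : Fin 3 → β) = ![a, f 0, f 1] := by
  ext i; fin_cases i <;> rfl

theorem dCE_apply_three (br : V7 → V7 → V7) (φ : Form 3) (v : Fin 4 → V7) :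
    dCE br φ v =
      -φ ![br (v 0) (v 1), v 2, v 3] + φ ![br (v 0) (v 2), v 1, v 3]
        - φ ![br (v 0) (v 3), v 1, v 2] - φ ![br (v 1) (v 2), v 0, v 3]
        + φ ![br (v 1) (v 3), v 0, v 2] - φ ![br (v 2) (v 3), v 0, v 1] := by
  show (∑ i : Fin 4, ∑ j : Fin 4, _) = _
  simp only [Fin.sum_univ_four, fin_cons_eq_vecCons_two]
  norm_num
  simp only [show (⟨2, by omega⟩ : Fin 4) = 2 from rfl, show (⟨3, by omega⟩ : Fin 4) = 3 from rfl]
  ring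

theorem eB_apply_three (idx : Fin 3 → Fin 7) (v : Fin 3 → V7) :
    eB idx v = v 0 (idx 0) * (v 1 (idx 1) * v 2 (idx 2) - v 1 (idx 2) * v 2 (idx 1))
      - v 0 (idx 1) * (v 1 (idx 0) * v 2 (idx 2) - v 1 (idx 2) * v 2 (idx 0))
      + v 0 (idx 2) * (v 1 (idx 0) * v 2 (idx 1) - v 1 (idx 1) * v 2 (idx 0)) := by
  simp only [eB, Matrix.det_fin_three, Matrix.of_apply]
  ring

theorem dphiK_eq_zero_general (α : ℝ) :
    ∀ v, dCE (brK α) (phiK α) v = 0 := by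
  intro v
  rw [dCE_apply_three]
  simp only [phiK, brK, eB_apply_three, Matrix.cons_val_zero, Matrix.cons_val_one, Matrix.cons_val]
  ring

/-- `φ_α` is closed. -/
theorem dphiK_eq_zero (α : ℝ) (hα : 0 < α) :
    ∀ v, dCE (brK α) (phiK α) v = 0 :=
  dphiK_eq_zero_general α

end G2Solitons
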